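/- arXiv:1209.4294 — 4 statements merged into one kernel-verified Lean document; each statement's English description precedes it below -/
import Mathlib

section
/- A Banach space X is weakly universal for a class B of Banach spaces (every Y ∈ B is isomorphic to a quotient of a closed subspace of X) if and only if every Y ∈ B is isomorphic to a closed subspace of a quotient of X. -/
/-!
If `T : Z → Y` is onto, the open mapping theorem identifies `Y` with `Z ⧸ ker T`, and
`Z ⧸ ker T` sits isometrically inside `X ⧸ ker T` because the distance from `z ∈ Z` to `ker T`
is the same in `Z` and in `X`. Conversely, if `T : Y → X ⧸ Z` is bounded below, its range `V`
is closed because `Y` is complete, so the preimage of `V` under the quotient map is a closed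
subspace of `X` which the quotient map sends onto `V ≅ Y`.
-/

open Function

variable (𝕜 X Y : Type*) [NontriviallyNormedField 𝕜] [SeminormedAddCommGroup X]
  [NormedSpace 𝕜 X] [NormedAddCommGroup Y] [NormedSpace 𝕜 Y]

def IsQuotientOfSubspace : Prop :=
  ∃ Z : Submodule 𝕜 X, IsClosed (Z : Set X) ∧ ∃ T : Z →L[𝕜] Y, Surjective T

def IsSubspaceOfQuotient : Prop :=
  ∃ Z : Submodule 𝕜 X, IsClosed (Z : Set X) ∧
    ∃ T : Y →L[𝕜] X ⧸ Z, Injective T ∧ ∃ c : ℝ, 0 < c ∧ ∀ y, c * ‖y‖ ≤ ‖T y‖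

variable {𝕜 X Y}

noncomputable def Submodule.mapQSubtypeₗᵢ (Z : Submodule 𝕜 X) (N : Submodule 𝕜 Z) :
    (Z ⧸ N) →ₗᵢ[𝕜] X ⧸ N.map Z.subtype where
  toLinearMap := N.mapQ _ Z.subtype (N.le_comap_map Z.subtype)
  norm_map' q := by
    obtain ⟨z, rfl⟩ := N.mkQ_surjective q
    change ‖((z : X) : X ⧸ (N.map Z.subtype).toAddSubgroup)‖ = ‖(z : Z ⧸ N.toAddSubgroup)‖
    rw [QuotientAddGroup.norm_mk, QuotientAddGroup.norm_mk,
      ← Metric.infDist_image (Φ := ((↑) : Z → X)) isometry_subtype_coe]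
    rfl

theorem IsQuotientOfSubspace.isSubspaceOfQuotient [CompleteSpace X] [CompleteSpace Y]
    (h : IsQuotientOfSubspace 𝕜 X Y) : IsSubspaceOfQuotient 𝕜 X Y := by
  obtain ⟨Z, hZ, T, hT⟩ := h
  have : CompleteSpace Z := hZ.completeSpace_coe
  have : IsClosed (T.ker : Set Z) := T.isClosed_ker
  let e : (Z ⧸ T.ker) ≃L[𝕜] Y := .ofBijective (T.ker.liftQL T le_rfl)
    (Submodule.ker_liftQ_eq_bot _ _ _ le_rfl)
    ((Submodule.range_liftQ _ _ _).trans (LinearMap.range_eq_top.mpr hT))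
  let j := Z.mapQSubtypeₗᵢ T.ker
  have hS : AntilipschitzWith _ (j ∘ e.symm) := j.antilipschitz.comp e.symm.antilipschitz
  have hW : IsClosed (T.ker.map Z.subtype : Set X) := by
    rw [Submodule.map_coe]
    exact hZ.isClosedEmbedding_subtypeVal.isClosedMap _ T.isClosed_ker
  exact ⟨_, hW, j.toContinuousLinearMap.comp (e.symm : Y →L[𝕜] Z ⧸ T.ker),
    hS.injective, antilipschitzWith_iff_exists_mul_le_norm.mp ⟨_, hS⟩⟩

theorem IsSubspaceOfQuotient.isQuotientOfSubspace [CompleteSpace Y]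
    (h : IsSubspaceOfQuotient 𝕜 X Y) : IsQuotientOfSubspace 𝕜 X Y := by
  obtain ⟨Z, hZ, T, -, c, hc, hT⟩ := h
  -- makes `X ⧸ Z` Hausdorff, where complete subsets are closed
  have : IsClosed (Z : Set X) := hZ
  obtain ⟨K, hK⟩ := antilipschitzWith_iff_exists_mul_le_norm.mpr ⟨c, hc, hT⟩
  let e₀ := LinearEquiv.ofInjective T.toLinearMap hK.injective
  let e : Y ≃L[𝕜] T.range := e₀.toContinuousLinearEquivOfBounds ‖T‖ K T.le_opNorm fun v => by
    have h := hK.le_mul_norm (map_zero T) (e₀.symm v)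
    rwa [show T (e₀.symm v) = v from congrArg Subtype.val (e₀.apply_symm_apply v)] at h
  have hV : IsClosed (T.range : Set (X ⧸ Z)) := by
    rw [LinearMap.coe_range]
    exact hK.isClosed_range T.uniformContinuous
  refine ⟨T.range.comap Z.mkQ, hV.preimage Z.mkQL.continuous,
    (e.symm : T.range →L[𝕜] Y).comp (Z.mkQL.restrict (q := T.range) fun _ hx => hx), ?_⟩
  exact e.symm.surjective.comp (Set.restrictPreimage_surjective _ Z.mkQ_surjective)

theorem isQuotientOfSubspace_iff_isSubspaceOfQuotient [CompleteSpace X] [CompleteSpace Y] :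
    IsQuotientOfSubspace 𝕜 X Y ↔ IsSubspaceOfQuotient 𝕜 X Y :=
  ⟨IsQuotientOfSubspace.isSubspaceOfQuotient, IsSubspaceOfQuotient.isQuotientOfSubspace⟩

/-- A Banach space `X` is weakly universal for a class `ℬ` of Banach spaces (every `Y ∈ ℬ`
is isomorphic to a quotient of a closed subspace of `X`, i.e. the image of a bounded linear
surjection from a closed subspace) if and only if every `Y ∈ ℬ` is isomorphic to a closed
subspace of a quotient of `X` (i.e. embeds in `X ⧸ Z` by an isomorphism onto its range). -/
theorem stmt12 (X : Type) [NormedAddCommGroup X] [NormedSpace ℝ X] [CompleteSpace X]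
    (ℬ : (Y : Type) → [NormedAddCommGroup Y] → [NormedSpace ℝ Y] → [CompleteSpace Y] → Prop) :
    (∀ (Y : Type) [NormedAddCommGroup Y] [NormedSpace ℝ Y] [CompleteSpace Y], ℬ Y →
        ∃ Z : Submodule ℝ X, IsClosed (Z : Set X) ∧
          ∃ T : Z →L[ℝ] Y, Function.Surjective T) ↔
      (∀ (Y : Type) [NormedAddCommGroup Y] [NormedSpace ℝ Y] [CompleteSpace Y], ℬ Y →
        ∃ Z : Submodule ℝ X, IsClosed (Z : Set X) ∧
          ∃ T : Y →L[ℝ] X ⧸ Z, Function.Injective T ∧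
            ∃ c : ℝ, 0 < c ∧ ∀ y : Y, c * ‖y‖ ≤ ‖T y‖) :=
  forall_congr' fun _ => forall_congr' fun _ => forall_congr' fun _ => forall_congr' fun _ =>
    imp_congr_right fun _ => isQuotientOfSubspace_iff_isSubspaceOfQuotient
end

section
/- Let K and B be associated classes of compact spaces and Banach spaces (K ∈ K implies C(K) ∈ B; X ∈ B implies B_{X*} ∈ K). If a compact space K ∈ K is weakly universal for K (every L ∈ K is a continuous image of a closed subspace of K), then C(K) is weakly universal for B: every X ∈ B is isomorphic to a quotient of a subspace of C(K). -/
open WeakDual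

/-!
`X` sits isometrically inside `C(B_{X*})` via `x ↦ (φ ↦ φ x)` (Hahn–Banach). Composing with a
continuous surjection from a closed `C ⊆ K` onto `B_{X*}` gives an isometric copy of `X` in
`C(C)`. By Tietze, restriction `C(K) → C(C)` is onto, so the functions on `K` whose restriction
lies in the copy of `X` form a closed subspace of `C(K)` mapping onto `X`.
-/

universe u

section

variable {𝕜 : Type*} [RCLike 𝕜]

section Dual

variable {X : Type*} [NormedAddCommGroup X] [NormedSpace 𝕜 X]

instance WeakDual.compactSpace_closedUnitBall :
    CompactSpace {φ : WeakDual 𝕜 X // ‖toStrongDual φ‖ ≤ 1} := by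
  have : IsCompact {φ : WeakDual 𝕜 X | ‖toStrongDual φ‖ ≤ 1} := by
    simpa [Set.preimage] using WeakDual.isCompact_closedBall (0 : StrongDual 𝕜 X) 1
  exact isCompact_iff_compactSpace.mp this

variable {S : Type*} [TopologicalSpace S]
  (f : C(S, {φ : WeakDual 𝕜 X // ‖toStrongDual φ‖ ≤ 1}))

noncomputable def WeakDual.evalₗ : X →ₗ[𝕜] C(S, 𝕜) where
  toFun x := ⟨fun s => (f s : WeakDual 𝕜 X) x,
    (eval_continuous x).comp (continuous_subtype_val.comp f.continuous)⟩
  map_add' _ _ := by ext; simp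
  map_smul' _ _ := by ext; simp

@[simp]
theorem WeakDual.evalₗ_apply (x : X) (s : S) : evalₗ f x s = (f s : WeakDual 𝕜 X) x := rfl

theorem WeakDual.norm_evalₗ_apply [CompactSpace S] (hf : Function.Surjective f) (x : X) :
    ‖evalₗ f x‖ = ‖x‖ := by
  refine le_antisymm ((ContinuousMap.norm_le _ (norm_nonneg x)).mpr fun s => ?_) ?_
  · calc ‖evalₗ f x s‖ ≤ ‖toStrongDual (f s : WeakDual 𝕜 X)‖ * ‖x‖ :=
          (toStrongDual (f s : WeakDual 𝕜 X)).le_opNorm x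
      _ ≤ ‖x‖ := mul_le_of_le_one_left (norm_nonneg x) (f s).2
  · obtain ⟨φ, hφ, hφx⟩ := exists_dual_vector'' 𝕜 x
    obtain ⟨s, hs⟩ := hf ⟨StrongDual.toWeakDual φ, hφ⟩
    calc ‖x‖ = ‖evalₗ f x s‖ := by simp [hs, hφx]
      _ ≤ ‖evalₗ f x‖ := ContinuousMap.norm_coe_le_norm _ s

noncomputable def WeakDual.evalₗᵢ [CompactSpace S] (hf : Function.Surjective f) :
    X →ₗᵢ[𝕜] C(S, 𝕜) :=
  ⟨evalₗ f, norm_evalₗ_apply f hf⟩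

end Dual

theorem ContinuousMap.surjective_restrict {K : Type u} [TopologicalSpace K] [NormalSpace K]
    {M : Type*} [TopologicalSpace M] [TietzeExtension.{u} M] {s : Set K} (hs : IsClosed s) :
    Function.Surjective (restrict s : C(K, M) → C(s, M)) :=
  fun g => g.exists_restrict_eq hs

theorem exists_isClosed_submodule_surjective_of_linearIsometry
    {E F X : Type*} [NormedAddCommGroup E] [NormedSpace 𝕜 E] [NormedAddCommGroup F]
    [NormedSpace 𝕜 F] [NormedAddCommGroup X] [NormedSpace 𝕜 X] [CompleteSpace X]
    (R : E →L[𝕜] F) (hR : Function.Surjective R) (J : X →ₗᵢ[𝕜] F) :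
    ∃ Z : Submodule 𝕜 E, IsClosed (Z : Set E) ∧ ∃ T : Z →L[𝕜] X, Function.Surjective T := by
  let Z := (LinearMap.range J.toLinearMap).comap R.toLinearMap
  refine ⟨Z, J.isometry.isClosedEmbedding.isClosed_range.preimage R.continuous, ?_⟩
  let T := (J.equivRange.symm.toContinuousLinearEquiv : _ →L[𝕜] X).comp
    ((R.comp Z.subtypeL).codRestrict (LinearMap.range J.toLinearMap) fun z => z.2)
  refine ⟨T, fun x => ?_⟩
  obtain ⟨e, he⟩ := hR (J x)
  exact ⟨⟨e, x, he.symm⟩, J.equivRange.symm_apply_eq.mpr (Subtype.ext he)⟩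

end

theorem stmt13_general
    (𝒦 : (K : Type) → [TopologicalSpace K] → Prop)
    (ℬ : (X : Type) → [NormedAddCommGroup X] → [NormedSpace ℝ X] → Prop)
    (h2 : ∀ (X : Type) [NormedAddCommGroup X] [NormedSpace ℝ X] [CompleteSpace X],
      ℬ X → 𝒦 {φ : WeakDual ℝ X // ‖toStrongDual φ‖ ≤ 1})
    (K : Type) [TopologicalSpace K] [CompactSpace K] [T2Space K]
    (huniv : ∀ (L : Type) [TopologicalSpace L] [CompactSpace L] [T2Space L],
      𝒦 L → ∃ C : Set K, IsClosed C ∧ ∃ f : C → L, Continuous f ∧ Function.Surjective f) :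
    ∀ (X : Type) [NormedAddCommGroup X] [NormedSpace ℝ X] [CompleteSpace X], ℬ X →
      ∃ Z : Submodule ℝ C(K, ℝ), IsClosed (Z : Set C(K, ℝ)) ∧
        ∃ T : Z →L[ℝ] X, Function.Surjective T := by
  intro X _ _ _ hX
  obtain ⟨C, hC, f, hf, hf_surj⟩ := huniv _ (h2 X hX)
  have : CompactSpace C := isCompact_iff_compactSpace.mp hC.isCompact
  exact exists_isClosed_submodule_surjective_of_linearIsometry
    (ContinuousMap.compCLM (R := ℝ) ℝ (ContinuousMap.restrict C (.id K)))
    (ContinuousMap.surjective_restrict hC) (WeakDual.evalₗᵢ ⟨f, hf⟩ hf_surj)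

/-- Let `𝒦` and `ℬ` be associated classes of compact Hausdorff spaces and Banach spaces
(`K ∈ 𝒦` implies `C(K) ∈ ℬ`; `X ∈ ℬ` implies `B_{X*} ∈ 𝒦`). If `K ∈ 𝒦` is weakly universal
for `𝒦` (every `L ∈ 𝒦` is a continuous image of a closed subspace of `K`), then `C(K)` is
weakly universal for `ℬ`: every `X ∈ ℬ` is isomorphic to a quotient of a closed subspace of
`C(K)`, i.e. the image of a bounded linear surjection from a closed subspace of `C(K)`. -/
theorem stmt13
    (𝒦 : (K : Type) → [TopologicalSpace K] → Prop)
    (ℬ : (X : Type) → [NormedAddCommGroup X] → [NormedSpace ℝ X] → Prop)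
    (h1 : ∀ (L : Type) [TopologicalSpace L] [CompactSpace L] [T2Space L],
      𝒦 L → ℬ C(L, ℝ))
    (h2 : ∀ (X : Type) [NormedAddCommGroup X] [NormedSpace ℝ X] [CompleteSpace X],
      ℬ X → 𝒦 {φ : WeakDual ℝ X // ‖toStrongDual φ‖ ≤ 1})
    (K : Type) [TopologicalSpace K] [CompactSpace K] [T2Space K] (hK : 𝒦 K)
    (huniv : ∀ (L : Type) [TopologicalSpace L] [CompactSpace L] [T2Space L],
      𝒦 L → ∃ C : Set K, IsClosed C ∧ ∃ f : C → L, Continuous f ∧ Function.Surjective f) :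
    ∀ (X : Type) [NormedAddCommGroup X] [NormedSpace ℝ X] [CompleteSpace X], ℬ X →
      ∃ Z : Submodule ℝ C(K, ℝ), IsClosed (Z : Set C(K, ℝ)) ∧
        ∃ T : Z →L[ℝ] X, Function.Surjective T :=
  stmt13_general 𝒦 ℬ h2 K huniv
end

section
/- The space ℕ* = βℕ \ ℕ maps continuously onto the Cantor cube 2^(2^ω); consequently ℕ* maps continuously onto [0,1]^(2^ω). -/
/-- `ℕ* = βℕ \ ℕ`, the Čech–Stone remainder of the discrete space of natural numbers. -/
def NStar : Type := {x : StoneCech ℕ // x ∉ Set.range (stoneCechUnit : ℕ → StoneCech ℕ)}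

instance : TopologicalSpace NStar := instTopologicalSpaceSubtype

/-!
If `f : ℕ → X` clusters along the cofinite filter at every point of a compact Hausdorff space
`X`, its extension `βℕ → X` is still onto on `ℕ*`: a point `y` is the image of the limit in `βℕ`
of a free ultrafilter along which `f` tends to `y`.

Such an `f` exists for the Cantor cube `Set ℕ → Bool`. Index it by pairs `(n, 𝒜)`, `𝒜` a finite
family of finite sets, and send `S` to whether `S ∩ [0, n) ∈ 𝒜`; this is the usual independent
family of size `2^ω`. Finitely many distinct sets have distinct traces on `[0, n)` for all large
`n`, so every basic neighbourhood contains the terms `(n, 𝒜)` for all large `n` and a suitable `𝒜`.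

For `[0,1]`, use that it is a continuous image of the Cantor set `ℕ → Bool` and that
`Set ℕ × ℕ` and `Set ℕ` are equinumerous.
-/

open Filter Function Set Topology

section StoneCech

variable {α X : Type*} [TopologicalSpace α] [TopologicalSpace X] [T2Space X] [CompactSpace X]

theorem stoneCechExtend_eq_of_tendsto {f : α → X} (hf : Continuous f) {u : Ultrafilter α}
    {z : StoneCech α} {y : X} (hz : Tendsto stoneCechUnit u (𝓝 z)) (hy : Tendsto f u (𝓝 y)) :
    stoneCechExtend hf z = y := by
  have hext := ((continuous_stoneCechExtend hf).tendsto z).comp hz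
  rw [stoneCechExtend_extends] at hext
  exact tendsto_nhds_unique hext hy

theorem notMem_range_stoneCechUnit_of_tendsto [DiscreteTopology α] {u : Ultrafilter α}
    (hu : (u : Filter α) ≤ cofinite) {z : StoneCech α} (hz : Tendsto stoneCechUnit u (𝓝 z)) :
    z ∉ range (stoneCechUnit : α → StoneCech α) := by
  classical
  rintro ⟨a, rfl⟩
  let isA : α → Bool := fun b => decide (b = a)
  have hfalse : Tendsto isA u (𝓝 false) := by
    rw [nhds_discrete, tendsto_pure]
    filter_upwards [hu (finite_singleton a).compl_mem_cofinite] with b hb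
    simpa [isA] using hb
  simpa [isA] using stoneCechExtend_eq_of_tendsto continuous_of_discreteTopology hz hfalse

theorem exists_stoneCechExtend_eq_of_mapClusterPt [DiscreteTopology α] {f : α → X}
    (hf : Continuous f) {y : X} (hy : MapClusterPt y cofinite f) :
    ∃ z ∉ range (stoneCechUnit : α → StoneCech α), stoneCechExtend hf z = y := by
  obtain ⟨u, hu, hfu⟩ := mapClusterPt_iff_ultrafilter.1 hy
  have hz : Tendsto stoneCechUnit u (𝓝 (u.map stoneCechUnit).lim) :=
    (u.map stoneCechUnit).le_nhds_lim
  exact ⟨_, notMem_range_stoneCechUnit_of_tendsto hu hz, stoneCechExtend_eq_of_tendsto hf hz hfu⟩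

end StoneCech

theorem NStar.exists_continuous_surjective_of_mapClusterPt {X : Type*} [TopologicalSpace X]
    [T2Space X] [CompactSpace X] (f : ℕ → X) (hf : ∀ y, MapClusterPt y cofinite f) :
    ∃ g : NStar → X, Continuous g ∧ Surjective g := by
  have hfc : Continuous f := continuous_of_discreteTopology
  refine ⟨fun z => stoneCechExtend hfc z.1,
    (continuous_stoneCechExtend hfc).comp continuous_subtype_val, fun y => ?_⟩
  obtain ⟨z, hz, hzy⟩ := exists_stoneCechExtend_eq_of_mapClusterPt hfc (hf y)
  exact ⟨⟨z, hz⟩, hzy⟩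

open scoped Classical in
noncomputable def initTrace (S : Set ℕ) (n : ℕ) : Finset ℕ :=
  {k ∈ Finset.range n | k ∈ S}

theorem eventually_initTrace_eq_imp_eq (S S' : Set ℕ) :
    ∀ᶠ n in atTop, initTrace S n = initTrace S' n → S = S' := by
  by_cases h : S = S'
  · exact Eventually.of_forall fun _ _ => h
  obtain ⟨k, hk⟩ : ∃ k, ¬(k ∈ S ↔ k ∈ S') := by simpa [Set.ext_iff] using h
  filter_upwards [eventually_gt_atTop k] with n hn heq
  refine absurd ?_ hk
  simpa [initTrace, hn] using congrArg (k ∈ ·) heq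

theorem eventually_injOn_initTrace {T : Set (Set ℕ)} (hT : T.Finite) :
    ∀ᶠ n in atTop, InjOn (initTrace · n) T :=
  (hT.eventually_all).2 fun S _ =>
    (hT.eventually_all).2 fun S' _ => eventually_initTrace_eq_imp_eq S S'

open scoped Classical in
noncomputable def traceMem (p : ℕ × Finset (Finset ℕ)) (S : Set ℕ) : Bool :=
  decide (initTrace S p.1 ∈ p.2)

theorem traceMem_eq_of_injOn {ε : Set ℕ → Bool} {I : Finset (Set ℕ)} {n : ℕ}
    (hn : InjOn (initTrace · n) I) :
    ∀ S ∈ I, traceMem (n, {S ∈ I | ε S}.image (initTrace · n)) S = ε S := by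
  intro S hS
  have hsub : (↑{S ∈ I | ε S} : Set (Set ℕ)) ⊆ I :=
    Finset.coe_subset.2 (Finset.filter_subset _ _)
  have hmem := hn.mem_image_iff hsub hS
  rw [← Finset.coe_image, Finset.mem_coe, Finset.mem_coe, Finset.mem_filter] at hmem
  simp [traceMem, hmem, hS]

theorem mapClusterPt_traceMem (ε : Set ℕ → Bool) : MapClusterPt ε cofinite traceMem := by
  refine mapClusterPt_iff_frequently.2 fun s hs => ?_
  rw [nhds_pi, mem_pi'] at hs
  obtain ⟨I, t, ht, hIs⟩ := hs
  let p : ℕ → ℕ × Finset (Finset ℕ) := fun n => (n, {S ∈ I | ε S}.image (initTrace · n))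
  have hp : Tendsto p atTop cofinite := by
    rw [← Nat.cofinite_eq_atTop]
    exact Injective.tendsto_cofinite fun m n h => congrArg Prod.fst h
  refine hp.frequently (Eventually.frequently ?_)
  filter_upwards [eventually_injOn_initTrace I.finite_toSet] with n hn
  refine hIs fun S hS => ?_
  rw [traceMem_eq_of_injOn hn S hS]
  exact mem_of_mem_nhds (ht S)

theorem NStar.exists_continuous_surjective_cantorCube :
    ∃ f : NStar → (Set ℕ → Bool), Continuous f ∧ Surjective f := by
  let e := (Denumerable.eqv (ℕ × Finset (Finset ℕ))).symm
  refine NStar.exists_continuous_surjective_of_mapClusterPt (traceMem ∘ e) fun ε => ?_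
  rw [MapClusterPt, ← map_map]
  exact (mapClusterPt_traceMem ε).mono (map_mono e.surjective.le_map_cofinite)

theorem exists_continuous_surjective_prod_nat_bool_pi (ι X : Type*) [Nonempty X] [MetricSpace X]
    [CompactSpace X] : ∃ g : (ι × ℕ → Bool) → (ι → X), Continuous g ∧ Surjective g := by
  obtain ⟨c, hc, hc'⟩ := exists_nat_bool_continuous_surjective_of_compact X
  refine ⟨fun F i => c fun n => F (i, n), by fun_prop, ?_⟩
  exact (Surjective.piMap fun _ => hc').comp (Equiv.curry ι ℕ Bool).surjective

theorem nonempty_set_nat_prod_nat_equiv : Nonempty (Set ℕ × ℕ ≃ Set ℕ) := by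
  rw [← Cardinal.eq, Cardinal.mk_prod, Cardinal.lift_id, Cardinal.lift_id, Cardinal.mk_nat]
  exact Cardinal.mul_aleph0_eq (Cardinal.aleph0_le_mk _)

/-- `ℕ*` maps continuously onto the Cantor cube `2^(2^ω)` (here with the index set of
cardinality `2^ω` realized as `Set ℕ`); consequently `ℕ*` also maps continuously onto
`[0,1]^(2^ω)`. -/
theorem stmt18 :
    (∃ f : NStar → (Set ℕ → Bool), Continuous f ∧ Function.Surjective f) ∧
      ∃ g : NStar → (Set ℕ → Set.Icc (0 : ℝ) 1), Continuous g ∧ Function.Surjective g := by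
  obtain ⟨f, hf, hf'⟩ := NStar.exists_continuous_surjective_cantorCube
  obtain ⟨e⟩ := nonempty_set_nat_prod_nat_equiv
  obtain ⟨g, hg, hg'⟩ := exists_continuous_surjective_prod_nat_bool_pi (Set ℕ) (Set.Icc (0 : ℝ) 1)
  let r := (Homeomorph.piCongrLeft (Y := fun _ => Bool) e).symm
  exact ⟨⟨f, hf, hf'⟩, g ∘ r ∘ f, hg.comp (r.continuous.comp hf), hg'.comp (r.surjective.comp hf')⟩
end

section
/- If X is a Banach space whose dual unit ball B_{X*} is weak*-separable, then X embeds isometrically into ℓ∞/c₀. -/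
/-!
Choose a sequence `ψ` in `B_{X*}` in which every member of a weak*-dense sequence recurs
infinitely often. By Hahn–Banach and weak*-density, for every `x` and every `r < ‖x‖` there are
infinitely many `n` with `r < |ψ n x|`. The class of `(ψ n x)ₙ` modulo `c₀` has norm at least the
limit superior of `|ψ n x|`, so `x ↦ [(ψ n x)ₙ]` is an isometry into `ℓ∞/c₀`.
-/

open WeakDual Filter

/-- `c₀`: the subspace of `ℓ∞ = (ℕ →ᵇ ℝ)` consisting of sequences converging to `0`. -/
def cZero : Submodule ℝ (BoundedContinuousFunction ℕ ℝ) where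
  carrier := {f | Tendsto (⇑f) atTop (nhds (0 : ℝ))}
  zero_mem' := by
    show Tendsto _ atTop _
    exact tendsto_const_nhds
  add_mem' := by
    intro f g hf hg
    have h := hf.add hg
    rw [add_zero] at h
    exact h
  smul_mem' := by
    intro c f hf
    simpa using hf.const_mul c

open Topology

lemma Nat.frequently_unpair_fst_eq (k : ℕ) : ∃ᶠ n : ℕ in atTop, n.unpair.1 = k :=
  frequently_atTop.2 fun N => ⟨Nat.pair k N, Nat.right_le_pair k N, by simp [Nat.unpair_pair]⟩

lemma le_norm_mk_cZero_of_frequently {f : BoundedContinuousFunction ℕ ℝ} {r : ℝ}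
    (hf : ∃ᶠ n in atTop, r < |f n|) :
    r ≤ ‖Submodule.Quotient.mk (p := cZero) f‖ := by
  refine QuotientAddGroup.le_norm_iff.2 fun m hm => ?_
  have hdiff : Tendsto (⇑(f - m)) atTop (𝓝 0) :=
    (Submodule.Quotient.eq cZero).1 (hm.symm : Submodule.Quotient.mk f = Submodule.Quotient.mk m)
  refine le_of_forall_pos_lt_add fun ε hε => ?_
  obtain ⟨n, hrn, hn⟩ :=
    (hf.and_eventually ((hdiff.abs.eventually (gt_mem_nhds (by simpa using hε))))).exists
  calc r < |f n| := hrn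
    _ ≤ |m n| + |(f - m) n| := by
      simpa [Real.norm_eq_abs] using norm_le_norm_add_norm_sub' (f n) (m n)
    _ < ‖m‖ + ε := add_lt_add_of_le_of_lt (m.norm_coe_le_norm n) hn

section DualBall

variable {X : Type*} [NormedAddCommGroup X] [NormedSpace ℝ X]

lemma abs_apply_le_of_norm_le_one {φ : StrongDual ℝ X} (hφ : ‖φ‖ ≤ 1) (x : X) : |φ x| ≤ ‖x‖ :=
  (φ.le_opNorm x).trans (mul_le_of_le_one_left (norm_nonneg x) hφ)

section

variable {ι : Type*} [TopologicalSpace ι] [DiscreteTopology ι]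

noncomputable def evalBounded (ψ : ι → StrongDual ℝ X) (hψ : ∀ i, ‖ψ i‖ ≤ 1) :
    X →ₗ[ℝ] BoundedContinuousFunction ι ℝ where
  toFun x := BoundedContinuousFunction.ofNormedAddCommGroup (fun i => ψ i x)
    continuous_of_discreteTopology ‖x‖ fun i => abs_apply_le_of_norm_le_one (hψ i) x
  map_add' x y := by ext; simp
  map_smul' c x := by ext; simp

lemma norm_evalBounded_le (ψ : ι → StrongDual ℝ X) (hψ : ∀ i, ‖ψ i‖ ≤ 1) (x : X) :
    ‖evalBounded ψ hψ x‖ ≤ ‖x‖ :=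
  BoundedContinuousFunction.norm_ofNormedAddCommGroup_le _ (norm_nonneg x)
    fun i => abs_apply_le_of_norm_le_one (hψ i) x

end

noncomputable def isometryQuotientCZero (ψ : ℕ → StrongDual ℝ X) (hψ : ∀ n, ‖ψ n‖ ≤ 1)
    (hnorming : ∀ x : X, ∀ r < ‖x‖, ∃ᶠ n in atTop, r < |ψ n x|) :
    X →ₗᵢ[ℝ] (BoundedContinuousFunction ℕ ℝ ⧸ cZero) where
  toLinearMap := cZero.mkQ ∘ₗ evalBounded ψ hψ
  norm_map' x := le_antisymm
    ((Submodule.Quotient.norm_mk_le _ _).trans (norm_evalBounded_le ψ hψ x))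
    (le_of_forall_lt_imp_le_of_dense fun r hr => le_norm_mk_cZero_of_frequently (hnorming x r hr))

lemma exists_lt_abs_apply_of_denseRange {ι : Type*}
    {u : ι → {φ : WeakDual ℝ X // ‖toStrongDual φ‖ ≤ 1}} (hu : DenseRange u)
    {x : X} {r : ℝ} (hr : r < ‖x‖) : ∃ i, r < |(u i).1 x| := by
  have hopen : IsOpen {φ : {φ : WeakDual ℝ X // ‖toStrongDual φ‖ ≤ 1} | r < |φ.1 x|} :=
    isOpen_lt continuous_const ((WeakDual.eval_continuous x).comp continuous_subtype_val).abs
  obtain ⟨g, hg, hgx⟩ := exists_dual_vector'' ℝ x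
  have hne : {φ : {φ : WeakDual ℝ X // ‖toStrongDual φ‖ ≤ 1} | r < |φ.1 x|}.Nonempty :=
    ⟨⟨toStrongDual.symm g, by simpa using hg⟩, by
      simpa [hgx, abs_of_nonneg (norm_nonneg x)] using hr⟩
  exact hu.exists_mem_open hopen hne

lemma exists_norming_seq_of_separableSpace
    [TopologicalSpace.SeparableSpace {φ : WeakDual ℝ X // ‖toStrongDual φ‖ ≤ 1}] :
    ∃ ψ : ℕ → StrongDual ℝ X, (∀ n, ‖ψ n‖ ≤ 1) ∧
      ∀ x : X, ∀ r < ‖x‖, ∃ᶠ n in atTop, r < |ψ n x| := by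
  have : Nonempty {φ : WeakDual ℝ X // ‖toStrongDual φ‖ ≤ 1} := ⟨⟨0, by simp⟩⟩
  obtain ⟨u, hu⟩ := TopologicalSpace.exists_dense_seq {φ : WeakDual ℝ X // ‖toStrongDual φ‖ ≤ 1}
  refine ⟨fun n => toStrongDual (u n.unpair.1).1, fun n => (u n.unpair.1).2, fun x r hr => ?_⟩
  obtain ⟨k, hk⟩ := exists_lt_abs_apply_of_denseRange hu hr
  exact (Nat.frequently_unpair_fst_eq k).mono fun n hn => by simpa [hn] using hk

end DualBall

theorem stmt19_general (X : Type) [NormedAddCommGroup X] [NormedSpace ℝ X]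
    (hsep : TopologicalSpace.SeparableSpace {φ : WeakDual ℝ X // ‖toStrongDual φ‖ ≤ 1}) :
    Nonempty (X →ₗᵢ[ℝ] (BoundedContinuousFunction ℕ ℝ ⧸ cZero)) := by
  obtain ⟨ψ, hψ, hnorming⟩ := exists_norming_seq_of_separableSpace (X := X)
  exact ⟨isometryQuotientCZero ψ hψ hnorming⟩

/-- If `X` is a Banach space whose closed dual unit ball is separable in the weak* topology,
then `X` embeds isometrically into `ℓ∞/c₀`. -/
theorem stmt19 (X : Type) [NormedAddCommGroup X] [NormedSpace ℝ X] [CompleteSpace X]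
    (hsep : TopologicalSpace.SeparableSpace {φ : WeakDual ℝ X // ‖toStrongDual φ‖ ≤ 1}) :
    Nonempty (X →ₗᵢ[ℝ] (BoundedContinuousFunction ℕ ℝ ⧸ cZero)) :=
  stmt19_general X hsep
end
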